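/- Suppose V is nonempty and let γ* = max{ min_{1 ≤ i ≤ r} d(S, G_i) : S ⊆ V nonempty }. If 0 ≤ γ < γ* and S₀ maximizes S ↦ min_{1 ≤ i ≤ r} m(S, G_i) − γ|S| over all subsets S ⊆ V, then S₀ ≠ ∅ and min_{1 ≤ i ≤ r} d(S₀, G_i) > γ. -/

import Mathlib

/-- Number of edges of `G` with both endpoints in `S`. -/
noncomputable def edgeCnt {V : Type*} (G : SimpleGraph V) (S : Finset V) : ℕ :=
  {e ∈ G.edgeSet | ∀ v ∈ e, v ∈ S}.ncard

/-- Density of the subgraph induced by `S` in `G`. -/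
noncomputable def dens {V : Type*} (G : SimpleGraph V) (S : Finset V) : ℝ :=
  (edgeCnt G S : ℝ) / (S.card : ℝ)

/-- Total density across the graph snapshots. -/
noncomputable def densTot {V : Type*} {r : ℕ} (G : Fin r → SimpleGraph V) (S : Finset V) : ℝ :=
  ∑ i, dens (G i) S

/-- Difference between the maximum and minimum induced density. -/
noncomputable def densDiff {V : Type*} {r : ℕ} (G : Fin r → SimpleGraph V) (S : Finset V) : ℝ :=
  (⨆ i, dens (G i) S) - (⨅ i, dens (G i) S)

/-- Difference between the maximum and minimum induced edge count. -/
noncomputable def edgeDiff {V : Type*} {r : ℕ} (G : Fin r → SimpleGraph V) (S : Finset V) : ℝ :=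
  (⨆ i, (edgeCnt (G i) S : ℝ)) - (⨅ i, (edgeCnt (G i) S : ℝ))


/-! Write `M S` for the minimum edge count `minᵢ m(S, Gᵢ)`, so that `minᵢ d(S, Gᵢ) = M S / |S|`.
A densest nonempty `S` has `M S - γ|S| = (γ* - γ)|S| > 0`, so a maximizer `S₀` of `M - γ|·|`
also has `M S₀ - γ|S₀| > 0`. Since `M ∅ = 0`, this forces `S₀ ≠ ∅`, and dividing by `|S₀|`
gives `M S₀ / |S₀| > γ`. -/

open Finset in
theorem Finset.nonempty_and_lt_div_card_of_forall_sub_le {α : Type*} {M : Finset α → ℝ} {γ : ℝ}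
    (hM : M ∅ = 0) {S S₀ : Finset α} (hS : S.Nonempty) (hγS : γ < M S / #S)
    (hmax : ∀ T, M T - γ * #T ≤ M S₀ - γ * #S₀) :
    S₀.Nonempty ∧ γ < M S₀ / #S₀ := by
  have hS_card : (0 : ℝ) < #S := by exact_mod_cast hS.card_pos
  have hpos : 0 < M S₀ - γ * #S₀ :=
    calc 0 < M S - γ * #S := by rwa [lt_div_iff₀ hS_card, ← sub_pos] at hγS
      _ ≤ M S₀ - γ * #S₀ := hmax S
  have hS₀ : S₀.Nonempty := by
    rw [Finset.nonempty_iff_ne_empty]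
    rintro rfl
    simp [hM] at hpos
  have hS₀_card : (0 : ℝ) < #S₀ := by exact_mod_cast hS₀.card_pos
  exact ⟨hS₀, by rw [lt_div_iff₀ hS₀_card]; linarith⟩

theorem edgeCnt_empty {V : Type*} (G : SimpleGraph V) : edgeCnt G ∅ = 0 := by
  rw [edgeCnt, ← Set.ncard_empty (Sym2 V)]
  congr 1
  ext e
  induction e with
  | h a b => simpa using fun _ => ⟨a, fun h => absurd rfl h⟩

-- No side conditions: `x / 0 = 0`, and an empty `⨅` in `ℝ` is `0`.
theorem iInf_dens {V ι : Type*} (G : ι → SimpleGraph V) (S : Finset V) :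
    ⨅ i, dens (G i) S = (⨅ i, (edgeCnt (G i) S : ℝ)) / S.card := by
  simp only [dens, div_eq_mul_inv, Real.iInf_mul_of_nonneg (inv_nonneg.2 (Nat.cast_nonneg S.card))]

theorem stmt12_general {V : Type*} {r : ℕ}
    (G : Fin r → SimpleGraph V) (γ γstar : ℝ)
    (hstar : IsGreatest
      {x : ℝ | ∃ S : Finset V, S.Nonempty ∧ (⨅ i, dens (G i) S) = x} γstar)
    (hγ : γ < γstar)
    (S₀ : Finset V)
    (hmax : ∀ S : Finset V,
      (⨅ i, (edgeCnt (G i) S : ℝ)) - γ * (S.card : ℝ) ≤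
        (⨅ i, (edgeCnt (G i) S₀ : ℝ)) - γ * (S₀.card : ℝ)) :
    S₀.Nonempty ∧ γ < ⨅ i, dens (G i) S₀ := by
  obtain ⟨S, hS, hSγstar⟩ := hstar.1
  rw [iInf_dens] at hSγstar ⊢
  refine Finset.nonempty_and_lt_div_card_of_forall_sub_le ?_ hS (hSγstar ▸ hγ) hmax
  simp [edgeCnt_empty]

theorem stmt12 {V : Type*} [Fintype V] [Nonempty V] {r : ℕ} (hr : 1 ≤ r)
    (G : Fin r → SimpleGraph V) (γ γstar : ℝ)
    (hstar : IsGreatest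
      {x : ℝ | ∃ S : Finset V, S.Nonempty ∧ (⨅ i, dens (G i) S) = x} γstar)
    (hγ0 : 0 ≤ γ) (hγ : γ < γstar)
    (S₀ : Finset V)
    (hmax : ∀ S : Finset V,
      (⨅ i, (edgeCnt (G i) S : ℝ)) - γ * (S.card : ℝ) ≤
        (⨅ i, (edgeCnt (G i) S₀ : ℝ)) - γ * (S₀.card : ℝ)) :
    S₀.Nonempty ∧ γ < ⨅ i, dens (G i) S₀ :=
  stmt12_general G γ γstar hstar hγ S₀ hmax
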